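/- arXiv:1703.08657 — 7 statements merged into one kernel-verified Lean document; each statement's English description precedes it below -/
import Mathlib

section
/- Let K ≥ 1 be an integer, p_p > 0 a pilot power, and β_1, …, β_K > 0 large-scale fading coefficients. Define σ²_k = (2/π)·K·p_p·β_k² / (K·p_p·β_k + 1), ᾱ² = (2/π) / (p_p·(β_1 + … + β_K) + 1), and κ²_k = K·ᾱ²·β_k²·p_p / (K·ᾱ²·β_k·p_p + ᾱ² + 1 − 2/π). Then for every k, the identity-pilot estimation error is strictly smaller than the Hadamard-pilot estimation error, i.e. β_k − σ²_k < β_k − κ²_k (equivalently σ²_k > κ²_k), if and only if β_k < (1/K)·(β_1 + … + β_K); and β_k − σ²_k > β_k − κ²_k if and only if β_k > (1/K)·(β_1 + … + β_K). -/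
/-!
Write `c = 2 / π` and `S = β₁ + … + β_K`. Clearing the factor `1 / (p S + 1)` shared by the
numerator and denominator of `κ²_k` gives
`κ²_k = c K p β_k² / (K p β_k + 1 + (1 - c) p (S - K β_k))`, which has
the numerator of `σ²_k` and its denominator shifted by `(1 - c) p (S - K β_k)`.
Since `c < 1`, the shift has the sign of `S - K β_k`, so `κ²_k < σ²_k` exactly when `β_k` is below
the mean, and `κ²_k > σ²_k` exactly when it is above.
-/

open Real Finset

theorem two_div_pi_lt_one : 2 / π < 1 :=
  (div_lt_one pi_pos).2 (by linarith [pi_gt_three])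

section ComparePositiveFractions

variable {α : Type*} [Field α] [LinearOrder α] [IsStrictOrderedRing α] {A D k x : α}

theorem div_add_mul_lt_div_iff (hA : 0 < A) (hD : 0 < D) (hk : 0 < k) (hDx : 0 < D + k * x) :
    A / (D + k * x) < A / D ↔ 0 < x := by
  rw [div_lt_div_iff_of_pos_left hA hDx hD, lt_add_iff_pos_right, mul_pos_iff_of_pos_left hk]

theorem div_lt_div_add_mul_iff (hA : 0 < A) (hD : 0 < D) (hk : 0 < k) (hDx : 0 < D + k * x) :
    A / D < A / (D + k * x) ↔ x < 0 := by
  rw [div_lt_div_iff_of_pos_left hA hD hDx, add_lt_iff_neg_left]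
  exact smul_neg_iff_of_pos_left hk

end ComparePositiveFractions

theorem hadamard_variance_eq (c K p b S : ℝ) (h : p * S + 1 ≠ 0) :
    K * (c / (p * S + 1)) * b ^ 2 * p / (K * (c / (p * S + 1)) * b * p + c / (p * S + 1) + 1 - c)
      = c * K * p * b ^ 2 / (K * p * b + 1 + (1 - c) * p * (S - K * b)) := by
  have hnum : K * (c / (p * S + 1)) * b ^ 2 * p = c * K * p * b ^ 2 / (p * S + 1) := by
    field_simp
  have hden : K * (c / (p * S + 1)) * b * p + c / (p * S + 1) + 1 - c
      = (K * p * b + 1 + (1 - c) * p * (S - K * b)) / (p * S + 1) := by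
    field_simp
    ring
  rw [hnum, hden, div_div_div_cancel_right₀ h]

theorem pilot_matrix_mse_comparison_general
    (K : ℕ) (pp : ℝ) (hpp : 0 < pp)
    (β : Fin K → ℝ) (hβ : ∀ k, 0 < β k)
    (σ2 κ2 : Fin K → ℝ) (α2 : ℝ)
    (hσ2 : ∀ k, σ2 k = (2 / π) * K * pp * (β k) ^ 2 / (K * pp * β k + 1))
    (hα2 : α2 = (2 / π) / (pp * (∑ i, β i) + 1))
    (hκ2 : ∀ k, κ2 k =
      K * α2 * (β k) ^ 2 * pp / (K * α2 * (β k) * pp + α2 + 1 - 2 / π)) :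
    ∀ k,
      (β k - σ2 k < β k - κ2 k ↔ β k < (1 / K) * ∑ i, β i) ∧
      (β k - σ2 k > β k - κ2 k ↔ β k > (1 / K) * ∑ i, β i) := by
  intro k
  set S := ∑ i, β i
  have hK : (0 : ℝ) < K := Nat.cast_pos.2 k.pos
  have hS : 0 < S := sum_pos (fun i _ => hβ i) ⟨k, mem_univ k⟩
  have hc : 0 < (1 - 2 / π) * pp := mul_pos (sub_pos.2 two_div_pi_lt_one) hpp
  have hκ : κ2 k
      = 2 / π * K * pp * β k ^ 2 / (K * pp * β k + 1 + (1 - 2 / π) * pp * (S - K * β k)) := by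
    rw [hκ2, hα2, hadamard_variance_eq _ _ _ _ _ (by positivity)]
  have hKpb : 0 < K * pp * β k := mul_pos (mul_pos hK hpp) (hβ k)
  have hA : 0 < 2 / π * K * pp * β k ^ 2 := by
    have := hβ k
    positivity
  have hD : 0 < K * pp * β k + 1 := by positivity
  have hDx : 0 < K * pp * β k + 1 + (1 - 2 / π) * pp * (S - K * β k) := by
    have := mul_pos hc hS
    rw [show K * pp * β k + 1 + (1 - 2 / π) * pp * (S - K * β k)
      = 2 / π * (K * pp * β k) + (1 - 2 / π) * pp * S + 1 by ring]
    positivity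
  have hmean_lt : β k < 1 / K * S ↔ K * β k < S := by rw [one_div_mul_eq_div, lt_div_iff₀' hK]
  have hmean_gt : 1 / K * S < β k ↔ S < K * β k := by rw [one_div_mul_eq_div, div_lt_iff₀' hK]
  constructor
  · rw [sub_lt_sub_iff_left, hσ2, hκ, div_add_mul_lt_div_iff hA hD hc hDx, sub_pos, hmean_lt]
  · rw [gt_iff_lt, sub_lt_sub_iff_left, hσ2, hκ, div_lt_div_add_mul_iff hA hD hc hDx, sub_neg,
      gt_iff_lt, hmean_gt]

/-- Comparison of identity-pilot and Hadamard-pilot channel-estimation errors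
in a one-bit quantized massive MIMO system. -/
theorem pilot_matrix_mse_comparison
    (K : ℕ) (hK : 1 ≤ K) (pp : ℝ) (hpp : 0 < pp)
    (β : Fin K → ℝ) (hβ : ∀ k, 0 < β k)
    (σ2 κ2 : Fin K → ℝ) (α2 : ℝ)
    (hσ2 : ∀ k, σ2 k = (2 / π) * K * pp * (β k) ^ 2 / (K * pp * β k + 1))
    (hα2 : α2 = (2 / π) / (pp * (∑ i, β i) + 1))
    (hκ2 : ∀ k, κ2 k =
      K * α2 * (β k) ^ 2 * pp / (K * α2 * (β k) * pp + α2 + 1 - 2 / π)) :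
    ∀ k,
      (β k - σ2 k < β k - κ2 k ↔ β k < (1 / K) * ∑ i, β i) ∧
      (β k - σ2 k > β k - κ2 k ↔ β k > (1 / K) * ∑ i, β i) :=
  pilot_matrix_mse_comparison_general K pp hpp β hβ σ2 κ2 α2 hσ2 hα2 hκ2
end

section
/- Fix E_S > 0 and set p_{S,i} = E_S/M for every i = 1,…,K (all other parameters fixed, independent of M). Then, as M → ∞ along the natural numbers, the double-quantized rate converges: R̃_k(M) → ((τ_c − 2τ_p)/(2τ_c))·log₂(1 + (2/π)·E_S·σ²_{SR,k}). -/
open Real Finset Filter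

/-!
With `p_{S,i} = E_S/M`, the numerator `Ã_k` is exactly `M³·E_S·σ⁴_{SR,k}·σ⁴_{RD,k}`, and the
denominator is `M³` times a polynomial in `1/M`. Every term carrying a source power `p_{S,i}`
gains a factor `1/M` and vanishes in the limit; what survives is `D̃_k + Ẽ_k ~ (π/2)·M²·t_k` with
`t_k ~ M·σ⁴_{RD,k}·σ²_{SR,k}`. Hence the SINR tends to `(2/π)·E_S·σ²_{SR,k}`, where `log₂(1 + ·)`
is continuous.
-/

/-- `(B̃_k + C̃_k + D̃_k + Ẽ_k + F̃_k + G̃_k)/M³` at `p_{S,i} = E_S/M`, written in `v = 1/M`, one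
summand per term; `τ` stands for `t_k/M` and `P` for `1 + Σ_n p_{S,n} β_{SR,n}`. -/
noncomputable def normalizedSinrDenominator {K : ℕ} (ES pR : ℝ) (βSR βRD σSR2 σRD2 : Fin K → ℝ)
    (k : Fin K) (v : ℝ) : ℝ :=
  let S₂ := ∑ n, σSR2 n * σRD2 n
  let S₃ := ∑ n, σSR2 n ^ 2 * σRD2 n
  let P := 1 + ES * v * ∑ n, βSR n
  let τ := σRD2 k ^ 2 * σSR2 k + βRD k * S₂ * v
  ES * v * (σSR2 k ^ 2 * σRD2 k * βRD k + βSR k * τ)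
    + ES * v * (∑ i ∈ univ.filter (· ≠ k), σSR2 i ^ 2 * σRD2 i * βRD k
        + τ * ∑ i ∈ univ.filter (· ≠ k), βSR i)
    + τ
    + (π / 2 - 1) * P * τ
    + (βRD k * (π / 2 - 1) * ES * v * S₃ + βRD k * (π / 2) * (π / 2 - 1) * P * S₂ * v)
    + (π / (2 * pR) * ES * v * S₃ + π ^ 2 / (4 * pR) * P * S₂ * v)

theorem tendsto_normalizedSinrDenominator_inv_natCast {K : ℕ} (ES pR : ℝ)
    (βSR βRD σSR2 σRD2 : Fin K → ℝ) (k : Fin K) :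
    Tendsto (fun M : ℕ => normalizedSinrDenominator ES pR βSR βRD σSR2 σRD2 k (M : ℝ)⁻¹) atTop
      (nhds (π / 2 * (σRD2 k ^ 2 * σSR2 k))) := by
  have hcont : Continuous (normalizedSinrDenominator ES pR βSR βRD σSR2 σRD2 k) := by
    unfold normalizedSinrDenominator
    fun_prop
  have hzero : normalizedSinrDenominator ES pR βSR βRD σSR2 σRD2 k 0
      = π / 2 * (σRD2 k ^ 2 * σSR2 k) := by
    simp only [normalizedSinrDenominator]
    ring
  exact hzero ▸ (hcont.tendsto 0).comp tendsto_inv_atTop_nhds_zero_nat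

theorem doubly_quantized_rate_source_power_scaling_limit_general
    (K : ℕ)
    (τc τp pR ES : ℝ)
    (hES : 0 < ES)
    (βSR βRD σSR2 σRD2 : Fin K → ℝ)
    (hσSR : ∀ i, 0 < σSR2 i) (hσRD : ∀ i, 0 < σRD2 i)
    (pS : ℕ → Fin K → ℝ) (hpS : ∀ M i, pS M i = ES / M)
    (t A B C D E F G R : ℕ → Fin K → ℝ)
    (ht : ∀ M k, t M k =
      M * (σRD2 k) ^ 2 * σSR2 k + βRD k * ∑ n, σSR2 n * σRD2 n)
    (hA : ∀ M k, A M k = pS M k * (M : ℝ) ^ 4 * (σSR2 k) ^ 2 * (σRD2 k) ^ 2)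
    (hB : ∀ M k, B M k = pS M k * (M : ℝ) ^ 2 *
      (M * (σSR2 k) ^ 2 * σRD2 k * βRD k + βSR k * t M k))
    (hC : ∀ M k, C M k = (M : ℝ) ^ 2 * ∑ i ∈ univ.filter (· ≠ k),
      pS M i * (M * (σSR2 i) ^ 2 * σRD2 i * βRD k + βSR i * t M k))
    (hD : ∀ M k, D M k = (M : ℝ) ^ 2 * t M k)
    (hE : ∀ M k, E M k =
      (π / 2 - 1) * (1 + ∑ n, pS M n * βSR n) * (M : ℝ) ^ 2 * t M k)
    (hF : ∀ M k, F M k =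
      βRD k * (π / 2 - 1) * (M : ℝ) ^ 3 *
        (∑ n, pS M n * (σSR2 n) ^ 2 * σRD2 n) +
      βRD k * ((M : ℝ) ^ 2 * π / 2) * (π / 2 - 1) * (1 + ∑ n, pS M n * βSR n) *
        ∑ n, σSR2 n * σRD2 n)
    (hG : ∀ M k, G M k =
      ((M : ℝ) ^ 3 * π / (2 * pR)) * (∑ n, pS M n * (σSR2 n) ^ 2 * σRD2 n) +
      ((M : ℝ) ^ 2 * π ^ 2 / (4 * pR)) * (1 + ∑ n, pS M n * βSR n) *
        ∑ n, σSR2 n * σRD2 n)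
    (hR : ∀ M k, R M k = ((τc - 2 * τp) / (2 * τc)) *
      Real.logb 2 (1 + A M k / (B M k + C M k + D M k + E M k + F M k + G M k))) :
    ∀ k, Tendsto (fun M : ℕ => R M k) atTop
      (nhds (((τc - 2 * τp) / (2 * τc)) *
        Real.logb 2 (1 + (2 / π) * ES * σSR2 k))) := by
  intro k
  have hσ := hσSR k
  have hσ' := hσRD k
  set g := normalizedSinrDenominator ES pR βSR βRD σSR2 σRD2 k
  have hsinr : ∀ M : ℕ, M ≠ 0 → A M k / (B M k + C M k + D M k + E M k + F M k + G M k)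
      = ES * σSR2 k ^ 2 * σRD2 k ^ 2 / g (M : ℝ)⁻¹ := by
    intro M hM
    have hden : B M k + C M k + D M k + E M k + F M k + G M k = (M : ℝ) ^ 3 * g (M : ℝ)⁻¹ := by
      simp only [g, hB, hC, hD, hE, hF, hG, hpS, normalizedSinrDenominator, mul_assoc,
        ← Finset.mul_sum, Finset.sum_add_distrib, ← Finset.sum_mul]
      rw [ht]
      field_simp
    rw [hden, hA, hpS]
    field_simp
  have hsinr_lim : Tendsto (fun M : ℕ => ES * σSR2 k ^ 2 * σRD2 k ^ 2 / g (M : ℝ)⁻¹) atTop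
      (nhds (2 / π * ES * σSR2 k)) := by
    have hlim := tendsto_normalizedSinrDenominator_inv_natCast ES pR βSR βRD σSR2 σRD2 k
    have hval : ES * σSR2 k ^ 2 * σRD2 k ^ 2 / (π / 2 * (σRD2 k ^ 2 * σSR2 k))
        = 2 / π * ES * σSR2 k := by
      field_simp
    exact hval ▸ tendsto_const_nhds.div hlim (by positivity)
  have hlog : (1 : ℝ) + 2 / π * ES * σSR2 k ≠ 0 := by positivity
  refine (((continuousAt_logb hlog).tendsto.comp
    (tendsto_const_nhds.add hsinr_lim)).const_mul _).congr' ?_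
  filter_upwards [eventually_ne_atTop 0] with M hM
  simp [hR, hsinr M hM]

/-- Power-scaling law at the sources: with `p_{S,i} = E_S/M`, the double-quantized
rate `R̃_k(M)` converges, as the number of relay antennas `M → ∞`, to
`((τc − 2τp)/(2τc))·log₂(1 + (2/π)·E_S·σ²_{SR,k})`. -/
theorem doubly_quantized_rate_source_power_scaling_limit
    (K : ℕ) (hK : 1 ≤ K)
    (τc τp pR ES : ℝ) (hτp : 0 < τp) (hτc : 2 * τp < τc) (hpR : 0 < pR)
    (hES : 0 < ES)
    (βSR βRD σSR2 σRD2 : Fin K → ℝ)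
    (hβSR : ∀ i, 0 < βSR i) (hβRD : ∀ i, 0 < βRD i)
    (hσSR : ∀ i, 0 < σSR2 i) (hσRD : ∀ i, 0 < σRD2 i)
    (pS : ℕ → Fin K → ℝ) (hpS : ∀ M i, pS M i = ES / M)
    (t A B C D E F G R : ℕ → Fin K → ℝ)
    (ht : ∀ M k, t M k =
      M * (σRD2 k) ^ 2 * σSR2 k + βRD k * ∑ n, σSR2 n * σRD2 n)
    (hA : ∀ M k, A M k = pS M k * (M : ℝ) ^ 4 * (σSR2 k) ^ 2 * (σRD2 k) ^ 2)
    (hB : ∀ M k, B M k = pS M k * (M : ℝ) ^ 2 *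
      (M * (σSR2 k) ^ 2 * σRD2 k * βRD k + βSR k * t M k))
    (hC : ∀ M k, C M k = (M : ℝ) ^ 2 * ∑ i ∈ univ.filter (· ≠ k),
      pS M i * (M * (σSR2 i) ^ 2 * σRD2 i * βRD k + βSR i * t M k))
    (hD : ∀ M k, D M k = (M : ℝ) ^ 2 * t M k)
    (hE : ∀ M k, E M k =
      (π / 2 - 1) * (1 + ∑ n, pS M n * βSR n) * (M : ℝ) ^ 2 * t M k)
    (hF : ∀ M k, F M k =
      βRD k * (π / 2 - 1) * (M : ℝ) ^ 3 *
        (∑ n, pS M n * (σSR2 n) ^ 2 * σRD2 n) +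
      βRD k * ((M : ℝ) ^ 2 * π / 2) * (π / 2 - 1) * (1 + ∑ n, pS M n * βSR n) *
        ∑ n, σSR2 n * σRD2 n)
    (hG : ∀ M k, G M k =
      ((M : ℝ) ^ 3 * π / (2 * pR)) * (∑ n, pS M n * (σSR2 n) ^ 2 * σRD2 n) +
      ((M : ℝ) ^ 2 * π ^ 2 / (4 * pR)) * (1 + ∑ n, pS M n * βSR n) *
        ∑ n, σSR2 n * σRD2 n)
    (hR : ∀ M k, R M k = ((τc - 2 * τp) / (2 * τc)) *
      Real.logb 2 (1 + A M k / (B M k + C M k + D M k + E M k + F M k + G M k))) :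
    ∀ k, Tendsto (fun M : ℕ => R M k) atTop
      (nhds (((τc - 2 * τp) / (2 * τc)) *
        Real.logb 2 (1 + (2 / π) * ES * σSR2 k))) :=
  doubly_quantized_rate_source_power_scaling_limit_general K τc τp pR ES hES βSR βRD σSR2 σRD2 hσSR
    hσRD pS hpS t A B C D E F G R ht hA hB hC hD hE hF hG hR
end

section
/- Fix E_S > 0 and set p_{S,i} = E_S/M for every i = 1,…,K (all other parameters fixed, independent of M). Then, as M → ∞ along the natural numbers, the unquantized rate converges: R^p_k(M) → ((τ_c − 2τ_p)/(2τ_c))·log₂(1 + E_S·σ̂²_{SR,k}). -/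
open Real Finset Filter Topology

/-!
With `p_{S,i} = E_S/M` the numerator `Â_k = E_S M³ σ̂⁴_{SR,k} σ̂⁴_{RD,k}` is exactly cubic in `M`,
and after clearing the factors `1/M` the denominator is a polynomial in `M` of degree three
whose only cubic contribution is `M³ σ̂²_{SR,k} σ̂⁴_{RD,k}`, coming from `D̂_k`. Hence the SINR
tends to the ratio of leading coefficients, `E_S σ̂²_{SR,k}`, and the rate follows by continuity
of `log₂` at `1 + E_S σ̂²_{SR,k} > 0`.
-/

theorem tendsto_cubic_div_cubic_atTop {c d e f : ℝ} (hd : d ≠ 0) :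
    Tendsto (fun x : ℝ => c * x ^ 3 / (d * x ^ 3 + e * x ^ 2 + f * x)) atTop (𝓝 (c / d)) := by
  have hlim : Tendsto (fun x : ℝ => c / (d + e * x⁻¹ + f * x⁻¹ ^ 2)) atTop
      (𝓝 (c / (d + e * 0 + f * 0 ^ 2))) :=
    tendsto_const_nhds.div
      ((tendsto_const_nhds.add (tendsto_inv_atTop_zero.const_mul e)).add
        ((tendsto_inv_atTop_zero.pow 2).const_mul f)) (by simpa using hd)
  rw [mul_zero, add_zero, zero_pow two_ne_zero, mul_zero, add_zero] at hlim
  refine hlim.congr' ?_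
  filter_upwards [eventually_gt_atTop 0] with x hx
  field_simp

theorem Finset.sum_mul_add_mul {ι R : Type*} [NonUnitalNonAssocSemiring R] (s : Finset ι)
    (c d : R) (f g : ι → R) :
    ∑ i ∈ s, (c * f i + d * g i) = c * ∑ i ∈ s, f i + d * ∑ i ∈ s, g i := by
  rw [sum_add_distrib, mul_sum, mul_sum]

theorem exists_unquantized_denominator_eq_cubic {K : ℕ} (pR ES : ℝ)
    (βSR βRD σhSR2 σhRD2 : Fin K → ℝ)
    (pS : ℕ → Fin K → ℝ) (hpS : ∀ M i, pS M i = ES / M)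
    (th Bh Ch Dh : ℕ → Fin K → ℝ) (αd γ2 : ℕ → ℝ)
    (hth : ∀ M k, th M k =
      M * (σhRD2 k) ^ 2 * σhSR2 k + βRD k * ∑ n, σhSR2 n * σhRD2 n)
    (hBh : ∀ M k, Bh M k = pS M k * (M : ℝ) ^ 2 *
      (M * (σhSR2 k) ^ 2 * σhRD2 k * βRD k + βSR k * th M k))
    (hCh : ∀ M k, Ch M k = (M : ℝ) ^ 2 * ∑ i ∈ univ.filter (· ≠ k),
      pS M i * (M * (σhSR2 i) ^ 2 * σhRD2 i * βRD k + βSR i * th M k))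
    (hDh : ∀ M k, Dh M k = (M : ℝ) ^ 2 * th M k)
    (hαd : ∀ M, αd M = M * (∑ n, σhSR2 n * σhRD2 n) +
      M * ∑ n, σhSR2 n * σhRD2 n * (M * pS M n * σhSR2 n + ∑ i, pS M i * βSR i))
    (hγ2 : ∀ M, γ2 M = pR / M) (k : Fin K) :
    ∃ e f : ℝ, ∀ M : ℕ, (M : ℝ) ≠ 0 → Bh M k + Ch M k + Dh M k + αd M / γ2 M =
      σhSR2 k * σhRD2 k ^ 2 * M ^ 3 + e * M ^ 2 + f * M := by
  set S := ∑ n, σhSR2 n * σhRD2 n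
  set T := ∑ i ∈ univ.filter (· ≠ k), βSR i
  have hCsum : ∀ M : ℕ, (M : ℝ) ≠ 0 → ∑ i ∈ univ.filter (· ≠ k),
      pS M i * (M * (σhSR2 i) ^ 2 * σhRD2 i * βRD k + βSR i * th M k) =
        ES * βRD k * ∑ i ∈ univ.filter (· ≠ k), (σhSR2 i) ^ 2 * σhRD2 i
          + ES / M * th M k * T := fun M hM => by
    rw [← sum_mul_add_mul]
    exact sum_congr rfl fun i _ => by rw [hpS]; field_simp
  have hαsum : ∀ M : ℕ, (M : ℝ) ≠ 0 →
      ∑ n, σhSR2 n * σhRD2 n * (M * pS M n * σhSR2 n + ∑ i, pS M i * βSR i) =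
        ES * ∑ n, σhSR2 n * σhRD2 n * σhSR2 n + ES / M * (∑ i, βSR i) * S := fun M hM => by
    simp only [hpS, ← mul_sum]
    rw [← sum_mul_add_mul]
    exact sum_congr rfl fun n _ => by field_simp
  refine ⟨ES * (σhSR2 k ^ 2 * σhRD2 k * βRD k + βSR k * σhSR2 k * σhRD2 k ^ 2)
      + ES * (βRD k * ∑ i ∈ univ.filter (· ≠ k), (σhSR2 i) ^ 2 * σhRD2 i
        + σhSR2 k * σhRD2 k ^ 2 * T)
      + βRD k * S + (S + ES * ∑ n, σhSR2 n * σhRD2 n * σhSR2 n) / pR,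
    ES * βRD k * S * (βSR k + T) + ES * (∑ i, βSR i) * S / pR, fun M hM => ?_⟩
  rw [hBh, hCh, hDh, hαd, hγ2, hCsum M hM, hαsum M hM, hth, hpS]
  field_simp
  ring

theorem unquantized_rate_source_power_scaling_limit_general
    (K : ℕ)
    (τc τp pR ES : ℝ)
    (hES : 0 < ES)
    (βSR βRD σhSR2 σhRD2 : Fin K → ℝ)
    (hσhSR : ∀ i, 0 < σhSR2 i) (hσhRD : ∀ i, 0 < σhRD2 i)
    (pS : ℕ → Fin K → ℝ) (hpS : ∀ M i, pS M i = ES / M)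
    (th Ah Bh Ch Dh : ℕ → Fin K → ℝ) (αd γ2 : ℕ → ℝ) (Rp : ℕ → Fin K → ℝ)
    (hth : ∀ M k, th M k =
      M * (σhRD2 k) ^ 2 * σhSR2 k + βRD k * ∑ n, σhSR2 n * σhRD2 n)
    (hAh : ∀ M k, Ah M k = pS M k * (M : ℝ) ^ 4 * (σhSR2 k) ^ 2 * (σhRD2 k) ^ 2)
    (hBh : ∀ M k, Bh M k = pS M k * (M : ℝ) ^ 2 *
      (M * (σhSR2 k) ^ 2 * σhRD2 k * βRD k + βSR k * th M k))
    (hCh : ∀ M k, Ch M k = (M : ℝ) ^ 2 * ∑ i ∈ univ.filter (· ≠ k),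
      pS M i * (M * (σhSR2 i) ^ 2 * σhRD2 i * βRD k + βSR i * th M k))
    (hDh : ∀ M k, Dh M k = (M : ℝ) ^ 2 * th M k)
    (hαd : ∀ M, αd M = M * (∑ n, σhSR2 n * σhRD2 n) +
      M * ∑ n, σhSR2 n * σhRD2 n * (M * pS M n * σhSR2 n + ∑ i, pS M i * βSR i))
    (hγ2 : ∀ M, γ2 M = pR / M)
    (hRp : ∀ M k, Rp M k = ((τc - 2 * τp) / (2 * τc)) *
      Real.logb 2 (1 + Ah M k / (Bh M k + Ch M k + Dh M k + αd M / γ2 M))) :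
    ∀ k, Tendsto (fun M : ℕ => Rp M k) atTop
      (nhds (((τc - 2 * τp) / (2 * τc)) *
        Real.logb 2 (1 + ES * σhSR2 k))) := by
  intro k
  have ha := hσhSR k
  have hb := hσhRD k
  obtain ⟨e, f, hden⟩ := exists_unquantized_denominator_eq_cubic pR ES βSR βRD σhSR2
    σhRD2 pS hpS th Bh Ch Dh αd γ2 hth hBh hCh hDh hαd hγ2 k
  have hsinr : Tendsto (fun M : ℕ => Ah M k / (Bh M k + Ch M k + Dh M k + αd M / γ2 M))
      atTop (𝓝 (ES * σhSR2 k)) := by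
    have hlim := (tendsto_cubic_div_cubic_atTop (c := ES * σhSR2 k ^ 2 * σhRD2 k ^ 2) (e := e)
      (f := f) (by positivity : σhSR2 k * σhRD2 k ^ 2 ≠ 0)).comp tendsto_natCast_atTop_atTop
    rw [show ES * σhSR2 k ^ 2 * σhRD2 k ^ 2 / (σhSR2 k * σhRD2 k ^ 2) = ES * σhSR2 k by
      field_simp] at hlim
    refine hlim.congr' ?_
    filter_upwards [eventually_ne_atTop 0] with M hM
    rw [Function.comp_apply, hden M (Nat.cast_ne_zero.mpr hM), hAh, hpS]
    field_simp
  simp only [hRp]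
  exact ((tendsto_const_nhds.add hsinr).logb (by positivity)).const_mul _

/-- Power-scaling law at the sources for the unquantized system: with
`p_{S,i} = E_S/M`, the perfect-ADC/perfect-DAC rate `R^p_k(M)` converges, as the
number of relay antennas `M → ∞`, to
`((τc − 2τp)/(2τc))·log₂(1 + E_S·σ̂²_{SR,k})`. -/
theorem unquantized_rate_source_power_scaling_limit
    (K : ℕ) (hK : 1 ≤ K)
    (τc τp pR ES : ℝ) (hτp : 0 < τp) (hτc : 2 * τp < τc) (hpR : 0 < pR)
    (hES : 0 < ES)
    (βSR βRD σhSR2 σhRD2 : Fin K → ℝ)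
    (hβSR : ∀ i, 0 < βSR i) (hβRD : ∀ i, 0 < βRD i)
    (hσhSR : ∀ i, 0 < σhSR2 i) (hσhRD : ∀ i, 0 < σhRD2 i)
    (pS : ℕ → Fin K → ℝ) (hpS : ∀ M i, pS M i = ES / M)
    (th Ah Bh Ch Dh : ℕ → Fin K → ℝ) (αd γ2 : ℕ → ℝ) (Rp : ℕ → Fin K → ℝ)
    (hth : ∀ M k, th M k =
      M * (σhRD2 k) ^ 2 * σhSR2 k + βRD k * ∑ n, σhSR2 n * σhRD2 n)
    (hAh : ∀ M k, Ah M k = pS M k * (M : ℝ) ^ 4 * (σhSR2 k) ^ 2 * (σhRD2 k) ^ 2)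
    (hBh : ∀ M k, Bh M k = pS M k * (M : ℝ) ^ 2 *
      (M * (σhSR2 k) ^ 2 * σhRD2 k * βRD k + βSR k * th M k))
    (hCh : ∀ M k, Ch M k = (M : ℝ) ^ 2 * ∑ i ∈ univ.filter (· ≠ k),
      pS M i * (M * (σhSR2 i) ^ 2 * σhRD2 i * βRD k + βSR i * th M k))
    (hDh : ∀ M k, Dh M k = (M : ℝ) ^ 2 * th M k)
    (hαd : ∀ M, αd M = M * (∑ n, σhSR2 n * σhRD2 n) +
      M * ∑ n, σhSR2 n * σhRD2 n * (M * pS M n * σhSR2 n + ∑ i, pS M i * βSR i))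
    (hγ2 : ∀ M, γ2 M = pR / M)
    (hRp : ∀ M k, Rp M k = ((τc - 2 * τp) / (2 * τc)) *
      Real.logb 2 (1 + Ah M k / (Bh M k + Ch M k + Dh M k + αd M / γ2 M))) :
    ∀ k, Tendsto (fun M : ℕ => Rp M k) atTop
      (nhds (((τc - 2 * τp) / (2 * τc)) *
        Real.logb 2 (1 + ES * σhSR2 k))) :=
  unquantized_rate_source_power_scaling_limit_general K τc τp pR ES hES βSR βRD σhSR2 σhRD2 hσhSR
    hσhRD pS hpS th Ah Bh Ch Dh αd γ2 Rp hth hAh hBh hCh hDh hαd hγ2 hRp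
end

section
/- Fix E_R > 0, a common source power p_S > 0 (p_{S,i} = p_S for all i), and set the relay power p_R = E_R/M (all other parameters fixed, independent of M). Then, as M → ∞ along the natural numbers, the double-quantized rate converges: R̃_k(M) → ((τ_c − 2τ_p)/(2τ_c))·log₂(1 + (2E_R/π)·σ⁴_{SR,k}σ⁴_{RD,k} / Σ_{n=1}^K σ⁴_{SR,n}σ²_{RD,n}). -/
/-! With `p_R = E_R / M`, the term `G` of the denominator grows like
`(π / (2 E_R)) · Σₙ p_S σ⁴_{SR,n} σ²_{RD,n} · M⁴`, while every other term is `O(M³)` and the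
numerator is exactly `p_S σ⁴_{SR,k} σ⁴_{RD,k} · M⁴`. So the SINR is a ratio of two quartics in `M`
and tends to the ratio of their leading coefficients; the rate follows by continuity of `log₂`. -/

open Real Finset Filter Topology

theorem tendsto_mul_pow_four_div_quartic (a : ℝ) {c : ℝ} (hc : c ≠ 0) (c₁ c₂ : ℝ) :
    Tendsto (fun x : ℝ => a * x ^ 4 / (c * x ^ 4 + c₁ * x ^ 3 + c₂ * x ^ 2)) atTop
      (𝓝 (a / c)) := by
  have hφ : ContinuousAt (fun y : ℝ => a / (c + c₁ * y + c₂ * y ^ 2)) 0 :=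
    continuousAt_const.div (by fun_prop) (by simpa using hc)
  have hlim := hφ.tendsto.comp tendsto_inv_atTop_zero
  simp only [mul_zero, add_zero, ne_eq, OfNat.ofNat_ne_zero, not_false_eq_true, zero_pow] at hlim
  refine hlim.congr' ?_
  filter_upwards [eventually_ne_atTop 0] with x hx
  simp only [Function.comp_apply]
  field_simp

theorem Finset.sum_mul_add_mul_s6 {ι α : Type*} [CommSemiring α] (s : Finset ι) (p x y : ι → α)
    (u v : α) :
    ∑ i ∈ s, p i * (u * x i + y i * v) = u * ∑ i ∈ s, p i * x i + v * ∑ i ∈ s, p i * y i := by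
  simp only [mul_sum, ← sum_add_distrib]
  exact sum_congr rfl fun i _ => by ring

theorem doubly_quantized_rate_relay_power_scaling_limit_general
    (K : ℕ)
    (τc τp ER pSv : ℝ) (hER : 0 < ER)
    (hpSv : 0 < pSv)
    (βSR βRD σSR2 σRD2 : Fin K → ℝ)
    (hσSR : ∀ i, 0 < σSR2 i) (hσRD : ∀ i, 0 < σRD2 i)
    (pS : Fin K → ℝ) (hpS : ∀ i, pS i = pSv)
    (pR : ℕ → ℝ) (hpR : ∀ M, pR M = ER / M)
    (t A B C D E F G R : ℕ → Fin K → ℝ)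
    (ht : ∀ M k, t M k =
      M * (σRD2 k) ^ 2 * σSR2 k + βRD k * ∑ n, σSR2 n * σRD2 n)
    (hA : ∀ M k, A M k = pS k * (M : ℝ) ^ 4 * (σSR2 k) ^ 2 * (σRD2 k) ^ 2)
    (hB : ∀ M k, B M k = pS k * (M : ℝ) ^ 2 *
      (M * (σSR2 k) ^ 2 * σRD2 k * βRD k + βSR k * t M k))
    (hC : ∀ M k, C M k = (M : ℝ) ^ 2 * ∑ i ∈ univ.filter (· ≠ k),
      pS i * (M * (σSR2 i) ^ 2 * σRD2 i * βRD k + βSR i * t M k))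
    (hD : ∀ M k, D M k = (M : ℝ) ^ 2 * t M k)
    (hE : ∀ M k, E M k =
      (π / 2 - 1) * (1 + ∑ n, pS n * βSR n) * (M : ℝ) ^ 2 * t M k)
    (hF : ∀ M k, F M k =
      βRD k * (π / 2 - 1) * (M : ℝ) ^ 3 *
        (∑ n, pS n * (σSR2 n) ^ 2 * σRD2 n) +
      βRD k * ((M : ℝ) ^ 2 * π / 2) * (π / 2 - 1) * (1 + ∑ n, pS n * βSR n) *
        ∑ n, σSR2 n * σRD2 n)
    (hG : ∀ M k, G M k =
      ((M : ℝ) ^ 3 * π / (2 * pR M)) * (∑ n, pS n * (σSR2 n) ^ 2 * σRD2 n) +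
      ((M : ℝ) ^ 2 * π ^ 2 / (4 * pR M)) * (1 + ∑ n, pS n * βSR n) *
        ∑ n, σSR2 n * σRD2 n)
    (hR : ∀ M k, R M k = ((τc - 2 * τp) / (2 * τc)) *
      Real.logb 2 (1 + A M k / (B M k + C M k + D M k + E M k + F M k + G M k))) :
    ∀ k, Tendsto (fun M : ℕ => R M k) atTop
      (nhds (((τc - 2 * τp) / (2 * τc)) *
        Real.logb 2 (1 + (2 * ER / π) * ((σSR2 k) ^ 2 * (σRD2 k) ^ 2 /
          ∑ n, (σSR2 n) ^ 2 * σRD2 n)))) := by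
  intro k
  set S := ∑ n, σSR2 n ^ 2 * σRD2 n
  set Sp := ∑ n, pS n * σSR2 n ^ 2 * σRD2 n
  set T := ∑ n, σSR2 n * σRD2 n
  set SB := ∑ n, pS n * βSR n
  set Ca := ∑ i ∈ univ.filter (· ≠ k), pS i * (σSR2 i ^ 2 * σRD2 i)
  set Cb := ∑ i ∈ univ.filter (· ≠ k), pS i * βSR i
  have hS : 0 < S := sum_pos (fun n _ => by have := hσSR n; have := hσRD n; positivity)
    ⟨k, mem_univ k⟩
  have hSp : Sp = pSv * S := by simp only [Sp, S, hpS, mul_sum, mul_assoc]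
  set τ₁ := σRD2 k ^ 2 * σSR2 k
  set τ₀ := βRD k * T
  -- `p_R = E_R / M` lifts `G` to order `M⁴`; every other term has order at most `M³`.
  obtain ⟨c₁, c₂, hden⟩ : ∃ c₁ c₂ : ℝ, ∀ M : ℕ, M ≠ 0 →
      B M k + C M k + D M k + E M k + F M k + G M k =
        π * Sp / (2 * ER) * M ^ 4 + c₁ * M ^ 3 + c₂ * M ^ 2 := by
    refine ⟨pS k * (σSR2 k ^ 2 * σRD2 k * βRD k + βSR k * τ₁) + βRD k * Ca + τ₁ * Cb + τ₁
        + (π / 2 - 1) * (1 + SB) * τ₁ + βRD k * (π / 2 - 1) * Sp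
        + π ^ 2 / (4 * ER) * (1 + SB) * T,
      (pS k * βSR k + Cb + 1 + (π / 2 - 1) * (1 + SB)) * τ₀
        + βRD k * (π / 2) * (π / 2 - 1) * (1 + SB) * T, fun M hM => ?_⟩
    have hM : (M : ℝ) ≠ 0 := Nat.cast_ne_zero.mpr hM
    have hCM : C M k = M ^ 2 * (M * βRD k * Ca + t M k * Cb) := by
      rw [hC, ← sum_mul_add_mul_s6]
      exact congrArg _ (sum_congr rfl fun i _ => by ring)
    rw [hB, hCM, hD, hE, hF, hG, ht, hpR]
    field_simp
    ring
  have hSINR : Tendsto (fun M : ℕ => A M k / (B M k + C M k + D M k + E M k + F M k + G M k))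
      atTop (𝓝 (pS k * σSR2 k ^ 2 * σRD2 k ^ 2 / (π * Sp / (2 * ER)))) := by
    refine ((tendsto_mul_pow_four_div_quartic _ (by rw [hSp]; positivity) c₁ c₂).comp
      tendsto_natCast_atTop_atTop).congr' ?_
    filter_upwards [eventually_ne_atTop 0] with M hM
    rw [Function.comp_apply, hA, hden M hM]
    ring
  have hlimit : pS k * σSR2 k ^ 2 * σRD2 k ^ 2 / (π * Sp / (2 * ER))
      = 2 * ER / π * (σSR2 k ^ 2 * σRD2 k ^ 2 / S) := by
    rw [hSp, hpS]
    field_simp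
  rw [hlimit] at hSINR
  simp only [hR]
  exact ((tendsto_const_nhds.add hSINR).logb (by have := hσSR k; have := hσRD k; positivity)).const_mul _

/-- Power-scaling law at the relay: with common source power `p_S` and relay power
`p_R = E_R/M`, the double-quantized rate `R̃_k(M)` converges, as `M → ∞`, to
`((τc − 2τp)/(2τc))·log₂(1 + (2E_R/π)·σ⁴_{SR,k}σ⁴_{RD,k} / Σ_n σ⁴_{SR,n}σ²_{RD,n})`. -/
theorem doubly_quantized_rate_relay_power_scaling_limit
    (K : ℕ) (hK : 1 ≤ K)
    (τc τp ER pSv : ℝ) (hτp : 0 < τp) (hτc : 2 * τp < τc) (hER : 0 < ER)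
    (hpSv : 0 < pSv)
    (βSR βRD σSR2 σRD2 : Fin K → ℝ)
    (hβSR : ∀ i, 0 < βSR i) (hβRD : ∀ i, 0 < βRD i)
    (hσSR : ∀ i, 0 < σSR2 i) (hσRD : ∀ i, 0 < σRD2 i)
    (pS : Fin K → ℝ) (hpS : ∀ i, pS i = pSv)
    (pR : ℕ → ℝ) (hpR : ∀ M, pR M = ER / M)
    (t A B C D E F G R : ℕ → Fin K → ℝ)
    (ht : ∀ M k, t M k =
      M * (σRD2 k) ^ 2 * σSR2 k + βRD k * ∑ n, σSR2 n * σRD2 n)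
    (hA : ∀ M k, A M k = pS k * (M : ℝ) ^ 4 * (σSR2 k) ^ 2 * (σRD2 k) ^ 2)
    (hB : ∀ M k, B M k = pS k * (M : ℝ) ^ 2 *
      (M * (σSR2 k) ^ 2 * σRD2 k * βRD k + βSR k * t M k))
    (hC : ∀ M k, C M k = (M : ℝ) ^ 2 * ∑ i ∈ univ.filter (· ≠ k),
      pS i * (M * (σSR2 i) ^ 2 * σRD2 i * βRD k + βSR i * t M k))
    (hD : ∀ M k, D M k = (M : ℝ) ^ 2 * t M k)
    (hE : ∀ M k, E M k =
      (π / 2 - 1) * (1 + ∑ n, pS n * βSR n) * (M : ℝ) ^ 2 * t M k)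
    (hF : ∀ M k, F M k =
      βRD k * (π / 2 - 1) * (M : ℝ) ^ 3 *
        (∑ n, pS n * (σSR2 n) ^ 2 * σRD2 n) +
      βRD k * ((M : ℝ) ^ 2 * π / 2) * (π / 2 - 1) * (1 + ∑ n, pS n * βSR n) *
        ∑ n, σSR2 n * σRD2 n)
    (hG : ∀ M k, G M k =
      ((M : ℝ) ^ 3 * π / (2 * pR M)) * (∑ n, pS n * (σSR2 n) ^ 2 * σRD2 n) +
      ((M : ℝ) ^ 2 * π ^ 2 / (4 * pR M)) * (1 + ∑ n, pS n * βSR n) *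
        ∑ n, σSR2 n * σRD2 n)
    (hR : ∀ M k, R M k = ((τc - 2 * τp) / (2 * τc)) *
      Real.logb 2 (1 + A M k / (B M k + C M k + D M k + E M k + F M k + G M k))) :
    ∀ k, Tendsto (fun M : ℕ => R M k) atTop
      (nhds (((τc - 2 * τp) / (2 * τc)) *
        Real.logb 2 (1 + (2 * ER / π) * ((σSR2 k) ^ 2 * (σRD2 k) ^ 2 /
          ∑ n, (σSR2 n) ^ 2 * σRD2 n)))) :=
  doubly_quantized_rate_relay_power_scaling_limit_general K τc τp ER pSv hER hpSv βSR βRD σSR2 σRD2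
    hσSR hσRD pS hpS pR hpR t A B C D E F G R ht hA hB hC hD hE hF hG hR
end

section
/- Fix E_R > 0, a common source power p_S > 0 (p_{S,i} = p_S for all i), and set the relay power p_R = E_R/M (all other parameters fixed, independent of M). Then, as M → ∞ along the natural numbers, the unquantized rate converges: R^p_k(M) → ((τ_c − 2τ_p)/(2τ_c))·log₂(1 + E_R·σ̂⁴_{SR,k}σ̂⁴_{RD,k} / Σ_{n=1}^K σ̂⁴_{SR,n}σ̂²_{RD,n}). -/
/-!
Divided by `M⁴`, numerator and denominator of the SINR become polynomials in `x = 1/M`. At `x = 0`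
all interference terms vanish, while the amplified relay noise `α̃_d/(γ² M⁴)` stays at
`p_S Σ_n σ̂⁴_{SR,n} σ̂²_{RD,n} / E_R`, because `γ² = E_R/M²` decays exactly as fast as the array gain grows.
-/

open Real Finset Filter Topology

theorem Filter.Tendsto.of_eventually_eq_comp_inv_natCast {f : ℕ → ℝ} {g : ℝ → ℝ}
    (hg : ContinuousAt g 0) (hfg : ∀ᶠ M : ℕ in atTop, f M = g (M : ℝ)⁻¹) :
    Tendsto f atTop (𝓝 (g 0)) :=
  (hg.tendsto.comp tendsto_inv_atTop_nhds_zero_nat).congr' (hfg.mono fun _ h => h.symm)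

section RelaySinr

variable {K : ℕ} (βSR βRD σSR σRD : Fin K → ℝ) (p ER : ℝ) (k : Fin K)

/-- The SINR `Â_k / (B̂_k + Ĉ_k + D̂_k + α̃_d / γ²)` for common source power `p` and `γ² = E_R / M²`,
with numerator and denominator divided by `M⁴`, in the variable `x = 1 / M`; `τ` is `t̂_k / M²`. -/
noncomputable def scaledSinr (x : ℝ) : ℝ :=
  let τ := x * (σRD k ^ 2 * σSR k) + x ^ 2 * (βRD k * ∑ n, σSR n * σRD n)
  p * σSR k ^ 2 * σRD k ^ 2 /
    (p * (x * (σSR k ^ 2 * σRD k * βRD k) + βSR k * τ)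
      + p * (x * βRD k * ∑ i ∈ univ.filter (· ≠ k), σSR i ^ 2 * σRD i
        + τ * ∑ i ∈ univ.filter (· ≠ k), βSR i)
      + τ
      + (x * ∑ n, σSR n * σRD n + p * ∑ n, σSR n ^ 2 * σRD n
        + x * (∑ n, σSR n * σRD n) * ∑ i, p * βSR i) / ER)

theorem scaledSinr_zero (hp : p ≠ 0) :
    scaledSinr βSR βRD σSR σRD p ER k 0
      = ER * (σSR k ^ 2 * σRD k ^ 2 / ∑ n, σSR n ^ 2 * σRD n) := by
  simp only [scaledSinr, zero_mul, zero_pow two_ne_zero, mul_zero, zero_add, add_zero]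
  field_simp

theorem continuousAt_scaledSinr (hp : p ≠ 0) (hER : ER ≠ 0)
    (hσ : ∑ n, σSR n ^ 2 * σRD n ≠ 0) :
    ContinuousAt (scaledSinr βSR βRD σSR σRD p ER k) 0 := by
  unfold scaledSinr
  refine continuousAt_const.div (by fun_prop) ?_
  simp [hp, hER, hσ]

theorem sum_filter_ne_cross_interference (M t : ℝ) :
    ∑ i ∈ univ.filter (· ≠ k), p * (M * σSR i ^ 2 * σRD i * βRD k + βSR i * t)
      = p * (M * βRD k * ∑ i ∈ univ.filter (· ≠ k), σSR i ^ 2 * σRD i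
        + t * ∑ i ∈ univ.filter (· ≠ k), βSR i) := by
  rw [mul_sum, mul_sum, ← sum_add_distrib, mul_sum]
  exact sum_congr rfl fun i _ => by ring

theorem sum_noise_amplification (M : ℝ) :
    ∑ n, σSR n * σRD n * (M * p * σSR n + ∑ i, p * βSR i)
      = M * p * ∑ n, σSR n ^ 2 * σRD n + (∑ n, σSR n * σRD n) * ∑ i, p * βSR i := by
  rw [mul_sum, sum_mul, ← sum_add_distrib]
  exact sum_congr rfl fun n _ => by ring

theorem sinr_eq_scaledSinr {M t : ℝ} (hM : M ≠ 0)
    (ht : t = M * σRD k ^ 2 * σSR k + βRD k * ∑ n, σSR n * σRD n) :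
    p * M ^ 4 * σSR k ^ 2 * σRD k ^ 2 /
      (p * M ^ 2 * (M * σSR k ^ 2 * σRD k * βRD k + βSR k * t)
        + M ^ 2 * ∑ i ∈ univ.filter (· ≠ k), p * (M * σSR i ^ 2 * σRD i * βRD k + βSR i * t)
        + M ^ 2 * t
        + (M * ∑ n, σSR n * σRD n + M * ∑ n, σSR n * σRD n * (M * p * σSR n + ∑ i, p * βSR i))
          / (ER / M / M))
      = scaledSinr βSR βRD σSR σRD p ER k M⁻¹ := by
  rw [sum_filter_ne_cross_interference, sum_noise_amplification, scaledSinr, ht]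
  field_simp
  ring

end RelaySinr

theorem unquantized_rate_relay_power_scaling_limit_general
    (K : ℕ) (hK : 1 ≤ K)
    (τc τp ER pSv : ℝ) (hER : 0 < ER)
    (hpSv : 0 < pSv)
    (βSR βRD σhSR2 σhRD2 : Fin K → ℝ)
    (hσhSR : ∀ i, 0 < σhSR2 i) (hσhRD : ∀ i, 0 < σhRD2 i)
    (pS : Fin K → ℝ) (hpS : ∀ i, pS i = pSv)
    (pR : ℕ → ℝ) (hpR : ∀ M, pR M = ER / M)
    (th Ah Bh Ch Dh : ℕ → Fin K → ℝ) (αd γ2 : ℕ → ℝ) (Rp : ℕ → Fin K → ℝ)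
    (hth : ∀ M k, th M k =
      M * (σhRD2 k) ^ 2 * σhSR2 k + βRD k * ∑ n, σhSR2 n * σhRD2 n)
    (hAh : ∀ M k, Ah M k = pS k * (M : ℝ) ^ 4 * (σhSR2 k) ^ 2 * (σhRD2 k) ^ 2)
    (hBh : ∀ M k, Bh M k = pS k * (M : ℝ) ^ 2 *
      (M * (σhSR2 k) ^ 2 * σhRD2 k * βRD k + βSR k * th M k))
    (hCh : ∀ M k, Ch M k = (M : ℝ) ^ 2 * ∑ i ∈ univ.filter (· ≠ k),
      pS i * (M * (σhSR2 i) ^ 2 * σhRD2 i * βRD k + βSR i * th M k))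
    (hDh : ∀ M k, Dh M k = (M : ℝ) ^ 2 * th M k)
    (hαd : ∀ M : ℕ, αd M = M * (∑ n, σhSR2 n * σhRD2 n) +
      M * ∑ n, σhSR2 n * σhRD2 n * (M * pS n * σhSR2 n + ∑ i, pS i * βSR i))
    (hγ2 : ∀ M : ℕ, γ2 M = pR M / M)
    (hRp : ∀ M k, Rp M k = ((τc - 2 * τp) / (2 * τc)) *
      Real.logb 2 (1 + Ah M k / (Bh M k + Ch M k + Dh M k + αd M / γ2 M))) :
    ∀ k, Tendsto (fun M : ℕ => Rp M k) atTop
      (nhds (((τc - 2 * τp) / (2 * τc)) *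
        Real.logb 2 (1 + ER * ((σhSR2 k) ^ 2 * (σhRD2 k) ^ 2 /
          ∑ n, (σhSR2 n) ^ 2 * σhRD2 n)))) := by
  intro k
  have hσ : 0 < ∑ n, σhSR2 n ^ 2 * σhRD2 n :=
    sum_pos (fun n _ => by have := hσhSR n; have := hσhRD n; positivity)
      (univ_nonempty_iff.2 ⟨⟨0, hK⟩⟩)
  have hsinr : Tendsto (fun M => Ah M k / (Bh M k + Ch M k + Dh M k + αd M / γ2 M)) atTop
      (𝓝 (scaledSinr βSR βRD σhSR2 σhRD2 pSv ER k 0)) := by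
    refine .of_eventually_eq_comp_inv_natCast
      (continuousAt_scaledSinr βSR βRD σhSR2 σhRD2 pSv ER k hpSv.ne' hER.ne' hσ.ne') ?_
    filter_upwards [eventually_ne_atTop 0] with M hM
    simp only [hAh, hBh, hCh, hDh, hαd, hγ2, hpR, hpS]
    exact sinr_eq_scaledSinr βSR βRD σhSR2 σhRD2 pSv ER k (Nat.cast_ne_zero.2 hM) (hth M k)
  rw [scaledSinr_zero βSR βRD σhSR2 σhRD2 pSv ER k hpSv.ne'] at hsinr
  have hlim_pos : 0 < 1 + ER * (σhSR2 k ^ 2 * σhRD2 k ^ 2 / ∑ n, σhSR2 n ^ 2 * σhRD2 n) := by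
    have := hσhSR k; have := hσhRD k; positivity
  simp only [hRp]
  exact ((tendsto_const_nhds.add hsinr).logb hlim_pos.ne').const_mul _

/-- Power-scaling law at the relay for the unquantized system: with common source
power `p_S` and relay power `p_R = E_R/M`, the perfect-ADC/perfect-DAC rate
`R^p_k(M)` converges, as `M → ∞`, to
`((τc − 2τp)/(2τc))·log₂(1 + E_R·σ̂⁴_{SR,k}σ̂⁴_{RD,k} / Σ_n σ̂⁴_{SR,n}σ̂²_{RD,n})`. -/
theorem unquantized_rate_relay_power_scaling_limit
    (K : ℕ) (hK : 1 ≤ K)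
    (τc τp ER pSv : ℝ) (hτp : 0 < τp) (hτc : 2 * τp < τc) (hER : 0 < ER)
    (hpSv : 0 < pSv)
    (βSR βRD σhSR2 σhRD2 : Fin K → ℝ)
    (hβSR : ∀ i, 0 < βSR i) (hβRD : ∀ i, 0 < βRD i)
    (hσhSR : ∀ i, 0 < σhSR2 i) (hσhRD : ∀ i, 0 < σhRD2 i)
    (pS : Fin K → ℝ) (hpS : ∀ i, pS i = pSv)
    (pR : ℕ → ℝ) (hpR : ∀ M, pR M = ER / M)
    (th Ah Bh Ch Dh : ℕ → Fin K → ℝ) (αd γ2 : ℕ → ℝ) (Rp : ℕ → Fin K → ℝ)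
    (hth : ∀ M k, th M k =
      M * (σhRD2 k) ^ 2 * σhSR2 k + βRD k * ∑ n, σhSR2 n * σhRD2 n)
    (hAh : ∀ M k, Ah M k = pS k * (M : ℝ) ^ 4 * (σhSR2 k) ^ 2 * (σhRD2 k) ^ 2)
    (hBh : ∀ M k, Bh M k = pS k * (M : ℝ) ^ 2 *
      (M * (σhSR2 k) ^ 2 * σhRD2 k * βRD k + βSR k * th M k))
    (hCh : ∀ M k, Ch M k = (M : ℝ) ^ 2 * ∑ i ∈ univ.filter (· ≠ k),
      pS i * (M * (σhSR2 i) ^ 2 * σhRD2 i * βRD k + βSR i * th M k))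
    (hDh : ∀ M k, Dh M k = (M : ℝ) ^ 2 * th M k)
    (hαd : ∀ M : ℕ, αd M = M * (∑ n, σhSR2 n * σhRD2 n) +
      M * ∑ n, σhSR2 n * σhRD2 n * (M * pS n * σhSR2 n + ∑ i, pS i * βSR i))
    (hγ2 : ∀ M : ℕ, γ2 M = pR M / M)
    (hRp : ∀ M k, Rp M k = ((τc - 2 * τp) / (2 * τc)) *
      Real.logb 2 (1 + Ah M k / (Bh M k + Ch M k + Dh M k + αd M / γ2 M))) :
    ∀ k, Tendsto (fun M : ℕ => Rp M k) atTop
      (nhds (((τc - 2 * τp) / (2 * τc)) *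
        Real.logb 2 (1 + ER * ((σhSR2 k) ^ 2 * (σhRD2 k) ^ 2 /
          ∑ n, (σhSR2 n) ^ 2 * σhRD2 n)))) :=
  unquantized_rate_relay_power_scaling_limit_general K hK τc τp ER pSv hER hpSv βSR βRD σhSR2 σhRD2
    hσhSR hσhRD pS hpS pR hpR th Ah Bh Ch Dh αd γ2 Rp hth hAh hBh hCh hDh hαd hγ2 hRp
end

section
/- Fix E_R > 0, a common source power p_S > 0 (p_{S,i} = p_S for all i), and set the relay power p_R = E_R/M (all other parameters fixed, independent of M). Then, as M → ∞ along the natural numbers, the perfect-ADC/one-bit-DAC rate converges: R^{pA}_k(M) → ((τ_c − 2τ_p)/(2τ_c))·log₂(1 + (2/π)·E_R·σ̂⁴_{SR,k}σ̂⁴_{RD,k} / Σ_{n=1}^K σ̂⁴_{SR,n}σ̂²_{RD,n}). -/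
/-!
With `p_R = E_R/M` the relay gain is `γ² = E_R/M²`, so the term `(π/2)·α̃_d/γ²` of the SINR
denominator grows like `M⁴`, as does the numerator `Â_k`, while every other term of the
denominator is `O(M³)`. Dividing both by `M⁴` writes the SINR as `Â_k M⁻⁴` over a polynomial in
`x = M⁻¹`, whose value at `x = 0` is `(π/2)·p_S·Σ_n σ̂⁴_{SR,n}σ̂²_{RD,n} / E_R`; continuity
in `x` gives the limit of the SINR, and continuity of `log₂` the limit of the rate.
-/

open Real Finset Filter Topology

lemma tendsto_div_of_eventually_eq_comp_inv_natCast {f : ℕ → ℝ} {G : ℝ → ℝ} {a : ℝ}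
    (hG : ContinuousAt G 0) (hG0 : G 0 ≠ 0)
    (hf : ∀ᶠ M : ℕ in atTop, f M = a / G (M : ℝ)⁻¹) :
    Tendsto f atTop (𝓝 (a / G 0)) :=
  (((continuousAt_const.div hG hG0).tendsto.comp
    tendsto_inv_atTop_nhds_zero_nat).congr' (hf.mono fun _ h => h.symm))

section NormalizedDenominator

variable {K : ℕ} (k : Fin K) (ER pSv : ℝ) (βSR βRD σSR σRD : Fin K → ℝ)

/-- `M⁻⁴` times the SINR denominator of user `k`, as a polynomial in `x = M⁻¹`; here `θ = x² t̂_k`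
and `α = x² α̃_d`. -/
noncomputable def normalizedDenom (x : ℝ) : ℝ :=
  let θ := σRD k ^ 2 * σSR k * x + βRD k * (∑ n, σSR n * σRD n) * x ^ 2
  let α := (1 + pSv * ∑ i, βSR i) * (∑ n, σSR n * σRD n) * x + pSv * ∑ n, σSR n ^ 2 * σRD n
  pSv * (σSR k ^ 2 * σRD k * βRD k * x + βSR k * θ)
    + pSv * ((∑ i ∈ univ.filter (· ≠ k), σSR i ^ 2 * σRD i) * βRD k * x
      + (∑ i ∈ univ.filter (· ≠ k), βSR i) * θ)
    + θ + (π / 2 - 1) * βRD k * x * α + π / 2 * α / ER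

lemma continuous_normalizedDenom : Continuous (normalizedDenom k ER pSv βSR βRD σSR σRD) := by
  unfold normalizedDenom
  fun_prop

lemma normalizedDenom_zero :
    normalizedDenom k ER pSv βSR βRD σSR σRD 0 = π / 2 * (pSv * ∑ n, σSR n ^ 2 * σRD n) / ER := by
  simp [normalizedDenom]

lemma sinr_eq_div_normalizedDenom
    (pS : Fin K → ℝ) (hpS : ∀ i, pS i = pSv) (pR : ℕ → ℝ) (hpR : ∀ M, pR M = ER / M)
    (th Ah Bh Ch Dh : ℕ → Fin K → ℝ) (αd γ2 : ℕ → ℝ)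
    (hth : ∀ M k, th M k = M * (σRD k) ^ 2 * σSR k + βRD k * ∑ n, σSR n * σRD n)
    (hAh : ∀ M k, Ah M k = pS k * (M : ℝ) ^ 4 * (σSR k) ^ 2 * (σRD k) ^ 2)
    (hBh : ∀ M k, Bh M k = pS k * (M : ℝ) ^ 2 *
      (M * (σSR k) ^ 2 * σRD k * βRD k + βSR k * th M k))
    (hCh : ∀ M k, Ch M k = (M : ℝ) ^ 2 * ∑ i ∈ univ.filter (· ≠ k),
      pS i * (M * (σSR i) ^ 2 * σRD i * βRD k + βSR i * th M k))
    (hDh : ∀ M k, Dh M k = (M : ℝ) ^ 2 * th M k)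
    (hαd : ∀ M : ℕ, αd M = M * (∑ n, σSR n * σRD n) +
      M * ∑ n, σSR n * σRD n * (M * pS n * σSR n + ∑ i, pS i * βSR i))
    (hγ2 : ∀ M : ℕ, γ2 M = pR M / M) {M : ℕ} (hM : M ≠ 0) :
    Ah M k / (Bh M k + Ch M k + Dh M k + (π / 2 - 1) * M * βRD k * αd M + (π / 2) * αd M / γ2 M)
      = pSv * (σSR k ^ 2 * σRD k ^ 2) / normalizedDenom k ER pSv βSR βRD σSR σRD (M : ℝ)⁻¹ := by
  have hM' : (M : ℝ) ≠ 0 := Nat.cast_ne_zero.mpr hM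
  have hC : ∑ i ∈ univ.filter (· ≠ k), pS i * (M * σSR i ^ 2 * σRD i * βRD k + βSR i * th M k)
      = pSv * ((∑ i ∈ univ.filter (· ≠ k), σSR i ^ 2 * σRD i) * βRD k * M
        + (∑ i ∈ univ.filter (· ≠ k), βSR i) * th M k) := by
    simp only [sum_mul, mul_sum, ← sum_add_distrib, hpS]
    exact sum_congr rfl fun i _ => by ring
  have hα : ∑ n, σSR n * σRD n * (M * pS n * σSR n + ∑ i, pS i * βSR i)
      = M * pSv * ∑ n, σSR n ^ 2 * σRD n + pSv * (∑ i, βSR i) * ∑ n, σSR n * σRD n := by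
    simp only [hpS, mul_sum, ← sum_add_distrib]
    exact sum_congr rfl fun n _ => by ring
  have hden : Bh M k + Ch M k + Dh M k + (π / 2 - 1) * M * βRD k * αd M + (π / 2) * αd M / γ2 M
      = (M : ℝ) ^ 4 * normalizedDenom k ER pSv βSR βRD σSR σRD (M : ℝ)⁻¹ := by
    rw [hBh, hCh, hC, hDh, hαd, hα, hγ2, hpR, hpS, hth, div_div_eq_mul_div, normalizedDenom]
    field_simp
    ring
  rw [hden, hAh, hpS, show pSv * (M : ℝ) ^ 4 * σSR k ^ 2 * σRD k ^ 2
    = (M : ℝ) ^ 4 * (pSv * (σSR k ^ 2 * σRD k ^ 2)) by ring, mul_div_mul_left _ _ (pow_ne_zero 4 hM')]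

end NormalizedDenominator

theorem perfectADC_onebitDAC_rate_relay_power_scaling_limit_general
    (K : ℕ)
    (τc τp ER pSv : ℝ) (hER : 0 < ER)
    (hpSv : 0 < pSv)
    (βSR βRD σhSR2 σhRD2 : Fin K → ℝ)
    (hσhSR : ∀ i, 0 < σhSR2 i) (hσhRD : ∀ i, 0 < σhRD2 i)
    (pS : Fin K → ℝ) (hpS : ∀ i, pS i = pSv)
    (pR : ℕ → ℝ) (hpR : ∀ M, pR M = ER / M)
    (th Ah Bh Ch Dh : ℕ → Fin K → ℝ) (αd γ2 : ℕ → ℝ) (RpA : ℕ → Fin K → ℝ)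
    (hth : ∀ M k, th M k =
      M * (σhRD2 k) ^ 2 * σhSR2 k + βRD k * ∑ n, σhSR2 n * σhRD2 n)
    (hAh : ∀ M k, Ah M k = pS k * (M : ℝ) ^ 4 * (σhSR2 k) ^ 2 * (σhRD2 k) ^ 2)
    (hBh : ∀ M k, Bh M k = pS k * (M : ℝ) ^ 2 *
      (M * (σhSR2 k) ^ 2 * σhRD2 k * βRD k + βSR k * th M k))
    (hCh : ∀ M k, Ch M k = (M : ℝ) ^ 2 * ∑ i ∈ univ.filter (· ≠ k),
      pS i * (M * (σhSR2 i) ^ 2 * σhRD2 i * βRD k + βSR i * th M k))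
    (hDh : ∀ M k, Dh M k = (M : ℝ) ^ 2 * th M k)
    (hαd : ∀ M : ℕ, αd M = M * (∑ n, σhSR2 n * σhRD2 n) +
      M * ∑ n, σhSR2 n * σhRD2 n * (M * pS n * σhSR2 n + ∑ i, pS i * βSR i))
    (hγ2 : ∀ M : ℕ, γ2 M = pR M / M)
    (hRpA : ∀ M k, RpA M k = ((τc - 2 * τp) / (2 * τc)) *
      Real.logb 2 (1 + Ah M k / (Bh M k + Ch M k + Dh M k +
        (π / 2 - 1) * M * βRD k * αd M + (π / 2) * αd M / γ2 M))) :
    ∀ k, Tendsto (fun M : ℕ => RpA M k) atTop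
      (nhds (((τc - 2 * τp) / (2 * τc)) *
        Real.logb 2 (1 + (2 / π) * ER * ((σhSR2 k) ^ 2 * (σhRD2 k) ^ 2 /
          ∑ n, (σhSR2 n) ^ 2 * σhRD2 n)))) := by
  intro k
  set G := normalizedDenom k ER pSv βSR βRD σhSR2 σhRD2
  have hS : 0 < ∑ n, σhSR2 n ^ 2 * σhRD2 n :=
    sum_pos (fun n _ => mul_pos (pow_pos (hσhSR n) 2) (hσhRD n)) ⟨k, mem_univ k⟩
  have hG0_eq : G 0 = π / 2 * (pSv * ∑ n, σhSR2 n ^ 2 * σhRD2 n) / ER := normalizedDenom_zero ..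
  have hG0 : 0 < G 0 := by
    rw [hG0_eq]
    positivity
  have hsinr : Tendsto (fun M : ℕ => Ah M k / (Bh M k + Ch M k + Dh M k +
      (π / 2 - 1) * M * βRD k * αd M + (π / 2) * αd M / γ2 M)) atTop
      (𝓝 (pSv * (σhSR2 k ^ 2 * σhRD2 k ^ 2) / G 0)) := by
    refine tendsto_div_of_eventually_eq_comp_inv_natCast
      (continuous_normalizedDenom ..).continuousAt hG0.ne' ?_
    filter_upwards [eventually_ne_atTop 0] with M hM
    exact sinr_eq_div_normalizedDenom k ER pSv βSR βRD σhSR2 σhRD2 pS hpS pR hpR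
      th Ah Bh Ch Dh αd γ2 hth hAh hBh hCh hDh hαd hγ2 hM
  have hlim : pSv * (σhSR2 k ^ 2 * σhRD2 k ^ 2) / G 0
      = 2 / π * ER * (σhSR2 k ^ 2 * σhRD2 k ^ 2 / ∑ n, σhSR2 n ^ 2 * σhRD2 n) := by
    rw [hG0_eq]
    field_simp
  have hpos : 1 + pSv * (σhSR2 k ^ 2 * σhRD2 k ^ 2) / G 0 ≠ 0 := by positivity
  simp only [hRpA]
  rw [← hlim]
  exact ((continuousAt_logb hpos).tendsto.comp (tendsto_const_nhds.add hsinr)).const_mul _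

/-- Power-scaling law at the relay for the unquantized system: with common source
power `p_S` and relay power `p_R = E_R/M`, the perfect-ADC/one-bit-DAC rate
`R^{pA}_k(M)` converges, as `M → ∞`, to
`((τc − 2τp)/(2τc))·log₂(1 + (2/π)·E_R·σ̂⁴_{SR,k}σ̂⁴_{RD,k} / Σ_n σ̂⁴_{SR,n}σ̂²_{RD,n})`. -/
theorem perfectADC_onebitDAC_rate_relay_power_scaling_limit
    (K : ℕ) (hK : 1 ≤ K)
    (τc τp ER pSv : ℝ) (hτp : 0 < τp) (hτc : 2 * τp < τc) (hER : 0 < ER)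
    (hpSv : 0 < pSv)
    (βSR βRD σhSR2 σhRD2 : Fin K → ℝ)
    (hβSR : ∀ i, 0 < βSR i) (hβRD : ∀ i, 0 < βRD i)
    (hσhSR : ∀ i, 0 < σhSR2 i) (hσhRD : ∀ i, 0 < σhRD2 i)
    (pS : Fin K → ℝ) (hpS : ∀ i, pS i = pSv)
    (pR : ℕ → ℝ) (hpR : ∀ M, pR M = ER / M)
    (th Ah Bh Ch Dh : ℕ → Fin K → ℝ) (αd γ2 : ℕ → ℝ) (RpA : ℕ → Fin K → ℝ)
    (hth : ∀ M k, th M k =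
      M * (σhRD2 k) ^ 2 * σhSR2 k + βRD k * ∑ n, σhSR2 n * σhRD2 n)
    (hAh : ∀ M k, Ah M k = pS k * (M : ℝ) ^ 4 * (σhSR2 k) ^ 2 * (σhRD2 k) ^ 2)
    (hBh : ∀ M k, Bh M k = pS k * (M : ℝ) ^ 2 *
      (M * (σhSR2 k) ^ 2 * σhRD2 k * βRD k + βSR k * th M k))
    (hCh : ∀ M k, Ch M k = (M : ℝ) ^ 2 * ∑ i ∈ univ.filter (· ≠ k),
      pS i * (M * (σhSR2 i) ^ 2 * σhRD2 i * βRD k + βSR i * th M k))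
    (hDh : ∀ M k, Dh M k = (M : ℝ) ^ 2 * th M k)
    (hαd : ∀ M : ℕ, αd M = M * (∑ n, σhSR2 n * σhRD2 n) +
      M * ∑ n, σhSR2 n * σhRD2 n * (M * pS n * σhSR2 n + ∑ i, pS i * βSR i))
    (hγ2 : ∀ M : ℕ, γ2 M = pR M / M)
    (hRpA : ∀ M k, RpA M k = ((τc - 2 * τp) / (2 * τc)) *
      Real.logb 2 (1 + Ah M k / (Bh M k + Ch M k + Dh M k +
        (π / 2 - 1) * M * βRD k * αd M + (π / 2) * αd M / γ2 M))) :
    ∀ k, Tendsto (fun M : ℕ => RpA M k) atTop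
      (nhds (((τc - 2 * τp) / (2 * τc)) *
        Real.logb 2 (1 + (2 / π) * ER * ((σhSR2 k) ^ 2 * (σhRD2 k) ^ 2 /
          ∑ n, (σhSR2 n) ^ 2 * σhRD2 n)))) :=
  perfectADC_onebitDAC_rate_relay_power_scaling_limit_general K τc τp ER pSv hER hpSv βSR βRD σhSR2
    σhRD2 hσhSR hσhRD pS hpS pR hpR th Ah Bh Ch Dh αd γ2 RpA hth hAh hBh hCh hDh hαd hγ2 hRpA
end

section
/- Let Z₁ and Z₂ be independent real standard Gaussian random variables (mean 0, variance 1) on a probability space, let ρ ∈ [−1, 1], and set W = ρ·Z₁ + √(1 − ρ²)·Z₂. Then E[sign(Z₁)·sign(W)] = (2/π)·arcsin(ρ). -/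
/-!
The law of `(Z₁, Z₂)` is the standard Gaussian on `ℝ²`, whose density is radial, so in polar
coordinates `(r, θ)` the angle is uniform on `(-π, π)` and independent of the radius. The
integrand `sign x * sign (ρ x + √(1 - ρ²) y)` is invariant under positive scaling, hence only
the angle matters: with `α = arcsin ρ` it equals `sign (cos θ) * sign (sin (θ + α))`, a
`π`-periodic function which on `(-π/2, π/2)` is `-1` before `-α` and `1` after it. Its integral
over a period is therefore `2α`, over the circle `4α`, and the expectation is `4α / (2π)`.
-/

open MeasureTheory ProbabilityTheory Real Set Function

namespace Real

@[fun_prop]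
theorem measurable_sign : Measurable Real.sign :=
  Measurable.ite measurableSet_Iio measurable_const
    (Measurable.ite measurableSet_Ioi measurable_const measurable_const)

theorem abs_sign_le_one (x : ℝ) : |sign x| ≤ 1 := by
  rcases sign_apply_eq x with h | h | h <;> simp [h]

theorem sign_mul_of_pos {r : ℝ} (hr : 0 < r) (a : ℝ) : sign (r * a) = sign a := by
  rcases lt_trichotomy a 0 with h | rfl | h
  · rw [sign_of_neg h, sign_of_neg (mul_neg_of_pos_of_neg hr h)]
  · simp
  · rw [sign_of_pos h, sign_of_pos (mul_pos hr h)]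

theorem sin_add_arcsin (θ : ℝ) {ρ : ℝ} (h₀ : -1 ≤ ρ) (h₁ : ρ ≤ 1) :
    sin (θ + arcsin ρ) = ρ * cos θ + √(1 - ρ ^ 2) * sin θ := by
  rw [sin_add, sin_arcsin h₀ h₁, cos_arcsin]
  ring

end Real

theorem intervalIntegral_eq_of_eqOn_Ioo {f : ℝ → ℝ} {a b c : ℝ} (hab : a ≤ b)
    (h : EqOn f (fun _ => c) (Ioo a b)) : ∫ x in a..b, f x = (b - a) * c := by
  rw [intervalIntegral.integral_of_le hab, integral_Ioc_eq_integral_Ioo,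
    setIntegral_congr_fun measurableSet_Ioo h]
  simp [hab]

theorem integral_sign_cos_mul_sign_sin_add {α : ℝ} (h₀ : -(π / 2) ≤ α) (h₁ : α ≤ π / 2) :
    ∫ θ in (-π)..π, sign (cos θ) * sign (sin (θ + α)) = 4 * α := by
  set g := fun θ => sign (cos θ) * sign (sin (θ + α))
  have hπ := pi_pos
  have hg : Periodic g π := fun θ => by
    simp only [g, cos_add_pi, add_right_comm θ π α, sin_add_pi, sign_neg, neg_mul_neg]
  have hint (a b : ℝ) : IntervalIntegrable g volume a b := by
    refine (intervalIntegrable_const (c := (1 : ℝ))).mono_fun (by fun_prop)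
      (ae_of_all _ fun θ => ?_)
    simpa [g, abs_mul] using mul_le_one₀ (abs_sign_le_one _) (abs_nonneg _) (abs_sign_le_one _)
  have hneg : EqOn g (fun _ => -1) (Ioo (-(π / 2)) (-α)) := fun θ ⟨hθ₀, hθ₁⟩ => by
    have hsin : sin (θ + α) < 0 := sin_neg_of_neg_of_neg_pi_lt (by linarith) (by linarith)
    simp only [g, sign_of_pos (cos_pos_of_mem_Ioo ⟨hθ₀, by linarith⟩), sign_of_neg hsin, one_mul]
  have hpos : EqOn g (fun _ => 1) (Ioo (-α) (π / 2)) := fun θ ⟨hθ₀, hθ₁⟩ => by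
    have hsin : 0 < sin (θ + α) := sin_pos_of_pos_of_lt_pi (by linarith) (by linarith)
    simp only [g, sign_of_pos (cos_pos_of_mem_Ioo ⟨by linarith, hθ₁⟩), sign_of_pos hsin, one_mul]
  have hhalf : ∫ θ in (-(π / 2))..(π / 2), g θ = 2 * α := by
    rw [← intervalIntegral.integral_add_adjacent_intervals (hint _ (-α)) (hint _ _),
      intervalIntegral_eq_of_eqOn_Ioo (by linarith) hneg,
      intervalIntegral_eq_of_eqOn_Ioo (by linarith) hpos]
    ring
  calc ∫ θ in (-π)..π, g θ = 2 * ∫ θ in (-π)..0, g θ := by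
        convert hg.intervalIntegral_add_zsmul_eq 2 (-π) hint using 2 <;> norm_num; ring
    _ = 2 * ∫ θ in (-(π / 2))..(π / 2), g θ := by
        convert congrArg (2 * ·) (hg.intervalIntegral_add_eq (-π) (-(π / 2))) using 3 <;> ring
    _ = 4 * α := by rw [hhalf]; ring

theorem integral_Ioi_mul_exp_neg_mul_sq {b : ℝ} (hb : 0 < b) :
    ∫ r in Ioi (0 : ℝ), r * exp (-b * r ^ 2) = (2 * b)⁻¹ := by
  rw [← Complex.ofReal_inj, ← integral_complex_ofReal]
  push_cast
  exact integral_mul_cexp_neg_mul_sq (by simpa using hb)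

theorem integral_gaussianReal_prod_eq_integral_mul (f : ℝ × ℝ → ℝ) :
    ∫ p, f p ∂(gaussianReal 0 1).prod (gaussianReal 0 1) =
      ∫ p, (2 * π)⁻¹ * exp (-(p.1 ^ 2 + p.2 ^ 2) / 2) * f p := by
  rw [gaussianReal_of_var_ne_zero 0 one_ne_zero,
    prod_withDensity (measurable_gaussianPDF 0 1) (measurable_gaussianPDF 0 1),
    ← Measure.volume_eq_prod, integral_withDensity_eq_integral_toReal_smul (by fun_prop)
      (ae_of_all _ fun _ => ENNReal.mul_lt_top gaussianPDF_lt_top gaussianPDF_lt_top)]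
  congr with p
  have h2π : √(2 * π) * √(2 * π) = 2 * π := mul_self_sqrt (by positivity)
  simp only [ENNReal.toReal_mul, toReal_gaussianPDF, smul_eq_mul, gaussianPDFReal,
    NNReal.coe_one, mul_one, sub_zero]
  rw [mul_mul_mul_comm, ← mul_inv, h2π, ← Real.exp_add]
  ring_nf

theorem integral_gaussianReal_prod_of_homogeneous {f : ℝ × ℝ → ℝ}
    (hf : ∀ r : ℝ, 0 < r → ∀ p, f (r • p) = f p) :
    ∫ p, f p ∂(gaussianReal 0 1).prod (gaussianReal 0 1) =
      (2 * π)⁻¹ * ∫ θ in Ioo (-π) π, f (cos θ, sin θ) := by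
  have hpolar : EqOn (fun p : ℝ × ℝ => p.1 • ((2 * π)⁻¹ *
        exp (-((polarCoord.symm p).1 ^ 2 + (polarCoord.symm p).2 ^ 2) / 2) * f (polarCoord.symm p)))
      (fun p => p.1 * exp (-(1 / 2) * p.1 ^ 2) * ((2 * π)⁻¹ * f (cos p.2, sin p.2)))
      polarCoord.target := by
    rintro ⟨r, θ⟩ ⟨hr, -⟩
    have hsymm : polarCoord.symm (r, θ) = r • (cos θ, sin θ) := by simp
    have hsq : (r * cos θ) ^ 2 + (r * sin θ) ^ 2 = r ^ 2 := by
      linear_combination r ^ 2 * cos_sq_add_sin_sq θ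
    dsimp only
    rw [hsymm, hf r hr]
    simp only [Prod.smul_fst, Prod.smul_snd, smul_eq_mul, hsq]
    ring_nf
  rw [integral_gaussianReal_prod_eq_integral_mul, ← integral_comp_polarCoord_symm,
    setIntegral_congr_fun polarCoord.open_target.measurableSet hpolar, polarCoord_target,
    Measure.volume_eq_prod, setIntegral_prod_mul (fun r => r * exp (-(1 / 2) * r ^ 2))
      (fun θ => (2 * π)⁻¹ * f (cos θ, sin θ)),
    integral_Ioi_mul_exp_neg_mul_sq one_half_pos, integral_const_mul]
  norm_num

theorem integral_sign_mul_sign_gaussianReal_prod {ρ : ℝ} (hρ : ρ ∈ Icc (-1) 1) :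
    ∫ p, sign p.1 * sign (ρ * p.1 + √(1 - ρ ^ 2) * p.2) ∂(gaussianReal 0 1).prod (gaussianReal 0 1)
      = 2 / π * arcsin ρ := by
  rw [integral_gaussianReal_prod_of_homogeneous fun r hr p => ?_]
  · simp_rw [← sin_add_arcsin _ hρ.1 hρ.2]
    rw [← integral_Ioc_eq_integral_Ioo, ← intervalIntegral.integral_of_le (by linarith [pi_pos]),
      integral_sign_cos_mul_sign_sin_add (neg_pi_div_two_le_arcsin ρ) (arcsin_le_pi_div_two ρ)]
    field_simp
    ring
  · rw [Prod.smul_fst, Prod.smul_snd, smul_eq_mul, smul_eq_mul, mul_left_comm ρ,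
      mul_left_comm √(1 - ρ ^ 2), ← mul_add, sign_mul_of_pos hr, sign_mul_of_pos hr]

/-- Arcsine law for one-bit quantized Gaussian signals: if `Z₁, Z₂` are independent
standard Gaussians and `W = ρ Z₁ + √(1 − ρ²) Z₂`, then
`E[sign(Z₁)·sign(W)] = (2/π)·arcsin ρ`. -/
theorem arcsine_law_one_bit_gaussian
    {Ω : Type*} [MeasurableSpace Ω] (μ : Measure Ω) [IsProbabilityMeasure μ]
    (Z₁ Z₂ : Ω → ℝ) (hindep : IndepFun Z₁ Z₂ μ)
    (hZ₁ : Measure.map Z₁ μ = gaussianReal 0 1)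
    (hZ₂ : Measure.map Z₂ μ = gaussianReal 0 1)
    (ρ : ℝ) (hρ : ρ ∈ Set.Icc (-1 : ℝ) 1)
    (W : Ω → ℝ)
    (hW : ∀ ω, W ω = ρ * Z₁ ω + Real.sqrt (1 - ρ ^ 2) * Z₂ ω) :
    ∫ ω, Real.sign (Z₁ ω) * Real.sign (W ω) ∂μ = (2 / π) * Real.arcsin ρ := by
  have hZ₁m : AEMeasurable Z₁ μ := aemeasurable_of_map_neZero (by rw [hZ₁]; infer_instance)
  have hZ₂m : AEMeasurable Z₂ μ := aemeasurable_of_map_neZero (by rw [hZ₂]; infer_instance)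
  have hlaw : μ.map (fun ω => (Z₁ ω, Z₂ ω)) = (gaussianReal 0 1).prod (gaussianReal 0 1) := by
    rw [(indepFun_iff_map_prod_eq_prod_map_map hZ₁m hZ₂m).mp hindep, hZ₁, hZ₂]
  simp_rw [hW]
  rw [← integral_sign_mul_sign_gaussianReal_prod hρ, ← hlaw,
    integral_map (hZ₁m.prodMk hZ₂m) (by fun_prop)]
end
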